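/- arXiv:1410.8041 — 3 statements merged into one kernel-verified Lean document; each statement's English description precedes it below -/
import Mathlib

section
/- Let p ∈ (-1, 0) and r > 0. Then for every y ∈ ℝ² with |y| sufficiently large (in particular |y| > 2r, so that the two discs are disjoint), the set Ω = B_r(0) ∪ B_r(y) satisfies (|Ω|/π)^((p+1)/2) > (1/(2π)) ∫_{∂Ω} |x|^p dσ(x); that is, the weighted isoperimetric inequality fails for disconnected sets containing the origin when -1 < p < 0. -/
open MeasureTheory Metric Real
open scoped NNReal ENNReal

noncomputable def circMap (c : EuclideanSpace ℝ (Fin 2)) (r : ℝ) (t : ℝ) :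
    EuclideanSpace ℝ (Fin 2) :=
  WithLp.toLp 2 (fun i => c i + (if i = 0 then r * Real.cos (t / r) else r * Real.sin (t / r)))

lemma circMap_lipschitz (c : EuclideanSpace ℝ (Fin 2)) {r : ℝ} (hr : 0 < r) :
    LipschitzWith 1 (circMap c r) := by
  apply LipschitzWith.of_dist_le_mul
  intro s t
  rw [NNReal.coe_one, one_mul, EuclideanSpace.dist_eq, Fin.sum_univ_two]
  have h0 : dist (circMap c r s 0) (circMap c r t 0)
      = |r * Real.cos (s / r) - r * Real.cos (t / r)| := by
    simp [circMap, Real.dist_eq, add_sub_add_left_eq_sub]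
  have h1 : dist (circMap c r s 1) (circMap c r t 1)
      = |r * Real.sin (s / r) - r * Real.sin (t / r)| := by
    simp [circMap, Real.dist_eq, add_sub_add_left_eq_sub]
  rw [h0, h1, sq_abs, sq_abs, Real.dist_eq]
  set a := s / r with ha
  set b := t / r with hb
  have hrne : r ≠ 0 := hr.ne'
  have habr : r * (a - b) = s - t := by rw [ha, hb]; field_simp
  have pyth_a := Real.sin_sq_add_cos_sq a
  have pyth_b := Real.sin_sq_add_cos_sq b
  have expand : (r * Real.cos a - r * Real.cos b) ^ 2 + (r * Real.sin a - r * Real.sin b) ^ 2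
      = r ^ 2 * (2 - 2 * (Real.cos a * Real.cos b + Real.sin a * Real.sin b)) := by
    linear_combination r ^ 2 * pyth_a + r ^ 2 * pyth_b
  have h3 : Real.sin ((a - b) / 2) ^ 2 = 1 / 2 - Real.cos (a - b) / 2 := by
    have := Real.sin_sq_eq_half_sub ((a - b) / 2)
    rwa [mul_div_cancel₀ _ (two_ne_zero)] at this
  have h4 : Real.sin ((a - b) / 2) ^ 2 ≤ ((a - b) / 2) ^ 2 := Real.sin_sq_le_sq
  have key : 2 - 2 * Real.cos (a - b) ≤ (a - b) ^ 2 := by nlinarith [h3, h4]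
  have key2 : r ^ 2 * (2 - 2 * Real.cos (a - b)) ≤ r ^ 2 * (a - b) ^ 2 :=
    mul_le_mul_of_nonneg_left key (sq_nonneg r)
  have hle : (r * Real.cos a - r * Real.cos b) ^ 2 + (r * Real.sin a - r * Real.sin b) ^ 2
      ≤ (s - t) ^ 2 := by
    rw [expand, ← Real.cos_sub, ← habr]
    nlinarith [key2]
  calc √((r * Real.cos a - r * Real.cos b) ^ 2 + (r * Real.sin a - r * Real.sin b) ^ 2)
      ≤ √((s - t) ^ 2) := Real.sqrt_le_sqrt hle
    _ = |s - t| := Real.sqrt_sq_eq_abs _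

lemma sphere_subset_circMap_image (c : EuclideanSpace ℝ (Fin 2)) {r : ℝ} (hr : 0 < r) :
    sphere c r ⊆ circMap c r '' (Set.Icc (-(π * r)) (π * r)) := by
  intro x hx
  have hdist : dist x c = r := mem_sphere.mp hx
  set z : ℂ := ⟨x 0 - c 0, x 1 - c 1⟩ with hz
  have habs : ‖z‖ = r := by
    rw [← hdist, EuclideanSpace.dist_eq, Fin.sum_univ_two, Complex.norm_def,
      Complex.normSq_mk, Real.dist_eq, Real.dist_eq, sq_abs, sq_abs]
    ring_nf
  have hzne : z ≠ 0 := by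
    intro h
    rw [h, norm_zero] at habs
    exact hr.ne habs
  have hcos : Real.cos (Complex.arg z) = (x 0 - c 0) / r := by
    rw [Complex.cos_arg hzne, habs]
  have hsin : Real.sin (Complex.arg z) = (x 1 - c 1) / r := by
    rw [Complex.sin_arg, habs]
  refine ⟨r * Complex.arg z, ?_, ?_⟩
  · have h1 := (Complex.arg_mem_Ioc z).1
    have h2 := (Complex.arg_mem_Ioc z).2
    constructor <;> nlinarith [hr]
  · ext i
    have hrne : r ≠ 0 := hr.ne'
    have ht : r * Complex.arg z / r = Complex.arg z := by field_simp
    fin_cases i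
    · show c 0 + (if (0 : Fin 2) = 0 then r * Real.cos (r * z.arg / r) else _) = x 0
      rw [if_pos rfl, ht, hcos]
      field_simp
      ring
    · show c 1 + (if (1 : Fin 2) = 0 then _ else r * Real.sin (r * z.arg / r)) = x 1
      rw [if_neg (by decide), ht, hsin]
      field_simp
      ring

lemma hausdorff_sphere_le (c : EuclideanSpace ℝ (Fin 2)) {r : ℝ} (hr : 0 < r) :
    μH[1] (sphere c r) ≤ ENNReal.ofReal (2 * π * r) := by
  calc μH[1] (sphere c r)
      ≤ μH[1] (circMap c r '' (Set.Icc (-(π * r)) (π * r))) :=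
        measure_mono (sphere_subset_circMap_image c hr)
    _ ≤ (1 : ℝ≥0) ^ (1 : ℝ) * μH[1] (Set.Icc (-(π * r)) (π * r)) :=
        (circMap_lipschitz c hr).hausdorffMeasure_image_le zero_le_one _
    _ = volume (Set.Icc (-(π * r)) (π * r)) := by
        rw [MeasureTheory.hausdorffMeasure_real]
        simp
    _ = ENNReal.ofReal (2 * π * r) := by
        rw [Real.volume_Icc]
        ring_nf

/-- Remark 2.2 (b): for `-1 < p < 0` the weighted isoperimetric inequality fails
for the disjoint union of two discs `B_r(0) ∪ B_r(y)` once `|y|` is large enough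
(in particular larger than `2r`, so that the discs are disjoint). -/
theorem weighted_isoperimetric_fails_disconnected
    (p : ℝ) (hp₁ : -1 < p) (hp₂ : p < 0) (r : ℝ) (hr : 0 < r) :
    ∃ M : ℝ, 2 * r < M ∧
      ∀ y : EuclideanSpace ℝ (Fin 2), M < ‖y‖ →
        (1 / (2 * π)) *
            (∫ x in frontier (ball (0 : EuclideanSpace ℝ (Fin 2)) r ∪ ball y r),
              ‖x‖ ^ p ∂μH[1]) <
          ((volume (ball (0 : EuclideanSpace ℝ (Fin 2)) r ∪ ball y r)).toReal / π) ^
            ((p + 1) / 2) := by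
  have hπ := Real.pi_pos
  have hpne : p ≠ 0 := hp₂.ne
  -- the constant ε
  set ε : ℝ := 2 ^ ((p + 1) / 2) - 1 with hεdef
  have hε : 0 < ε := by
    have h1 : (1 : ℝ) < 2 ^ ((p + 1) / 2) :=
      (Real.one_lt_rpow_iff_of_pos (by norm_num)).2 (Or.inl ⟨one_lt_two, by linarith⟩)
    rw [hεdef]
    linarith
  have hrp : (0 : ℝ) < r ^ p := Real.rpow_pos_of_pos hr p
  set D : ℝ := (ε / 2 * r ^ p) ^ (1 / p) with hDdef
  have hDbase : (0 : ℝ) < ε / 2 * r ^ p := mul_pos (half_pos hε) hrp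
  have hD : 0 < D := Real.rpow_pos_of_pos hDbase _
  have hDp : D ^ p = ε / 2 * r ^ p := by
    rw [hDdef, ← Real.rpow_mul hDbase.le, one_div, inv_mul_cancel₀ hpne, Real.rpow_one]
  refine ⟨max (2 * r + 1) (r + D), lt_of_lt_of_le (by linarith) (le_max_left _ _), ?_⟩
  intro y hy
  have hyM1 : 2 * r + 1 ≤ max (2 * r + 1) (r + D) := le_max_left _ _
  have hyM2 : r + D ≤ max (2 * r + 1) (r + D) := le_max_right _ _
  -- disjointness of balls
  have hdisj : Disjoint (ball (0 : EuclideanSpace ℝ (Fin 2)) r) (ball y r) :=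
    ball_disjoint_ball (by rw [dist_zero_left]; linarith)
  -- frontier
  set F := frontier (ball (0 : EuclideanSpace ℝ (Fin 2)) r ∪ ball y r) with hFdef
  have hFsub : F ⊆ sphere (0 : EuclideanSpace ℝ (Fin 2)) r ∪ sphere y r := by
    refine (frontier_union_subset _ _).trans ?_
    rw [frontier_ball _ hr.ne', frontier_ball _ hr.ne']
    exact Set.union_subset_union Set.inter_subset_left Set.inter_subset_right
  set A := F ∩ sphere (0 : EuclideanSpace ℝ (Fin 2)) r with hAdef
  set B := F ∩ sphere y r with hBdef
  have hFAB : F = A ∪ B := by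
    rw [hAdef, hBdef, ← Set.inter_union_distrib_left, Set.inter_eq_left.mpr hFsub]
  have hFm : MeasurableSet F := isClosed_frontier.measurableSet
  have hAm : MeasurableSet A := hFm.inter isClosed_sphere.measurableSet
  have hBm : MeasurableSet B := hFm.inter isClosed_sphere.measurableSet
  have hdisjAB : Disjoint A B := by
    rw [Set.disjoint_left]
    rintro x ⟨-, hx0⟩ ⟨-, hxy⟩
    have h0 : dist x 0 = r := mem_sphere.mp hx0
    have h1 : dist x y = r := mem_sphere.mp hxy
    have := dist_triangle y x 0
    rw [dist_comm y x] at this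
    have hy0 : dist y 0 = ‖y‖ := dist_zero_right y
    linarith
  -- norms on A and B
  have hnormA : ∀ x ∈ A, ‖x‖ = r := by
    rintro x ⟨-, hx⟩
    simpa using mem_sphere_zero_iff_norm.mp hx
  have hnormB : ∀ x ∈ B, D ≤ ‖x‖ := by
    rintro x ⟨-, hx⟩
    have h1 : ‖x - y‖ = r := mem_sphere_iff_norm.mp hx
    have := abs_norm_sub_norm_le x y
    rw [h1] at this
    have := abs_le.mp this
    linarith
  -- the integrand
  set f : EuclideanSpace ℝ (Fin 2) → ℝ := fun x => ‖x‖ ^ p with hfdef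
  have hf_cont : ∀ x : EuclideanSpace ℝ (Fin 2), ‖x‖ ≠ 0 → ContinuousAt f x := by
    intro x hx
    exact (Real.continuousAt_rpow_const ‖x‖ p (Or.inl hx)).comp continuous_norm.continuousAt
  have hboundA : ∀ x ∈ A, ‖f x‖ ≤ r ^ p := by
    intro x hx
    rw [hfdef]
    simp only [hnormA x hx]
    rw [Real.norm_eq_abs, abs_of_nonneg (Real.rpow_nonneg hr.le p)]
  have hboundB : ∀ x ∈ B, ‖f x‖ ≤ ε / 2 * r ^ p := by
    intro x hx
    have h1 : D ≤ ‖x‖ := hnormB x hx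
    have h2 : ‖x‖ ^ p ≤ D ^ p := Real.rpow_le_rpow_of_nonpos hD h1 hp₂.le
    rw [hfdef]
    rw [Real.norm_eq_abs, abs_of_nonneg (Real.rpow_nonneg (norm_nonneg x) p)]
    rw [← hDp]; exact h2
  -- finiteness of measures
  have hμA : μH[1] A ≤ ENNReal.ofReal (2 * π * r) :=
    (measure_mono Set.inter_subset_right).trans (hausdorff_sphere_le _ hr)
  have hμB : μH[1] B ≤ ENNReal.ofReal (2 * π * r) :=
    (measure_mono Set.inter_subset_right).trans (hausdorff_sphere_le _ hr)
  have hμA' : μH[1] A < ∞ := hμA.trans_lt ENNReal.ofReal_lt_top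
  have hμB' : μH[1] B < ∞ := hμB.trans_lt ENNReal.ofReal_lt_top
  have htA : (μH[1] A).toReal ≤ 2 * π * r :=
    ENNReal.toReal_le_of_le_ofReal (by positivity) hμA
  have htB : (μH[1] B).toReal ≤ 2 * π * r :=
    ENNReal.toReal_le_of_le_ofReal (by positivity) hμB
  -- integrability
  have haeA : ∀ᵐ x ∂(μH[1].restrict A), ‖f x‖ ≤ r ^ p :=
    (ae_restrict_iff' hAm).2 (ae_of_all _ hboundA)
  have haeB : ∀ᵐ x ∂(μH[1].restrict B), ‖f x‖ ≤ ε / 2 * r ^ p :=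
    (ae_restrict_iff' hBm).2 (ae_of_all _ hboundB)
  have hcontA : ContinuousOn f A := fun x hx =>
    (hf_cont x (by rw [hnormA x hx]; exact hr.ne')).continuousWithinAt
  have hcontB : ContinuousOn f B := fun x hx =>
    (hf_cont x (by have := hnormB x hx; intro h; rw [h] at this; linarith)).continuousWithinAt
  have hintA : IntegrableOn f A μH[1] :=
    ⟨hcontA.aestronglyMeasurable hAm, HasFiniteIntegral.restrict_of_bounded _ hμA' haeA⟩
  have hintB : IntegrableOn f B μH[1] :=
    ⟨hcontB.aestronglyMeasurable hBm, HasFiniteIntegral.restrict_of_bounded _ hμB' haeB⟩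
  -- integral bounds
  have hIA : ∫ x in A, f x ∂μH[1] ≤ r ^ p * (2 * π * r) := by
    have h := norm_setIntegral_le_of_norm_le_const_ae hμA' haeA
    calc ∫ x in A, f x ∂μH[1] ≤ ‖∫ x in A, f x ∂μH[1]‖ := le_abs_self _
      _ ≤ r ^ p * (μH[1] A).toReal := h
      _ ≤ r ^ p * (2 * π * r) := mul_le_mul_of_nonneg_left htA hrp.le
  have hIB : ∫ x in B, f x ∂μH[1] ≤ ε / 2 * r ^ p * (2 * π * r) := by
    have h := norm_setIntegral_le_of_norm_le_const_ae hμB' haeB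
    calc ∫ x in B, f x ∂μH[1] ≤ ‖∫ x in B, f x ∂μH[1]‖ := le_abs_self _
      _ ≤ ε / 2 * r ^ p * (μH[1] B).toReal := h
      _ ≤ ε / 2 * r ^ p * (2 * π * r) :=
          mul_le_mul_of_nonneg_left htB (by positivity)
  have hsplit : ∫ x in F, f x ∂μH[1] = (∫ x in A, f x ∂μH[1]) + ∫ x in B, f x ∂μH[1] := by
    rw [hFAB]
    exact setIntegral_union hdisjAB hBm hintA hintB
  -- volume computation
  have hvol : (volume (ball (0 : EuclideanSpace ℝ (Fin 2)) r ∪ ball y r)).toReal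
      = 2 * (π * r ^ 2) := by
    rw [measure_union hdisj measurableSet_ball, EuclideanSpace.volume_ball,
      EuclideanSpace.volume_ball]
    have hcard : Fintype.card (Fin 2) = 2 := Fintype.card_fin 2
    rw [hcard]
    have hg : Real.Gamma ((2 : ℕ) / 2 + 1) = 1 := by
      norm_num [Real.Gamma_two]
    rw [hg, Real.sq_sqrt Real.pi_nonneg]
    have hfin : ENNReal.ofReal r ^ 2 * ENNReal.ofReal (π / 1) ≠ ⊤ :=
      ENNReal.mul_ne_top (ENNReal.pow_ne_top ENNReal.ofReal_ne_top) ENNReal.ofReal_ne_top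
    rw [ENNReal.toReal_add hfin hfin]
    rw [ENNReal.toReal_mul, ENNReal.toReal_pow, ENNReal.toReal_ofReal hr.le,
      ENNReal.toReal_ofReal (by positivity)]
    ring
  have hrp1 : (0 : ℝ) < r ^ (p + 1) := Real.rpow_pos_of_pos hr _
  have hrpr : r ^ p * r = r ^ (p + 1) := by
    rw [Real.rpow_add hr, Real.rpow_one]
  -- RHS value
  have hRHS : ((volume (ball (0 : EuclideanSpace ℝ (Fin 2)) r ∪ ball y r)).toReal / π) ^
      ((p + 1) / 2) = (1 + ε) * r ^ (p + 1) := by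
    rw [hvol]
    have hbase : 2 * (π * r ^ 2) / π = 2 * r ^ 2 := by field_simp
    rw [hbase, Real.mul_rpow (by norm_num) (sq_nonneg r), ← Real.rpow_natCast r 2,
      ← Real.rpow_mul hr.le]
    norm_num
    rw [show (2 : ℝ) * ((p + 1) / 2) = p + 1 by ring]
    rw [hεdef]
    ring
  rw [hRHS, hsplit]
  have hchain : (1 / (2 * π)) * ((∫ x in A, f x ∂μH[1]) + ∫ x in B, f x ∂μH[1])
      ≤ (1 / (2 * π)) * (r ^ p * (2 * π * r) + ε / 2 * r ^ p * (2 * π * r)) := by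
    apply mul_le_mul_of_nonneg_left (by linarith) (by positivity)
  have heq : (1 / (2 * π)) * (r ^ p * (2 * π * r) + ε / 2 * r ^ p * (2 * π * r))
      = (1 + ε / 2) * r ^ (p + 1) := by
    rw [← hrpr]; field_simp
  calc (1 / (2 * π)) * ((∫ x in A, f x ∂μH[1]) + ∫ x in B, f x ∂μH[1])
      ≤ (1 + ε / 2) * r ^ (p + 1) := heq ▸ hchain
    _ < (1 + ε) * r ^ (p + 1) := by nlinarith [hrp1, hε]
end

section
/- Let a, b ∈ ℝ² with a ≠ b, suppose that 0 lies on the straight line through a and b, and let p ≥ 0. Then for every C¹ curve γ : [0,1] → ℝ² with γ(0) = a and γ(1) = b one has ∫₀¹ |γ(t)|^p |γ'(t)| dt ≥ ∫₀¹ |a + t(b − a)|^p |b − a| dt; that is, the straight line segment [a,b] minimizes the weighted length ∫_γ |x|^p dσ among all C¹ curves joining a and b. -/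
open MeasureTheory Real
open scoped RealInnerProductSpace

/-- Lemma 2.3: if `0` lies on the line through `a ≠ b` and `p ≥ 0`, then among
all `C¹` curves joining `a` to `b` the straight segment minimizes the weighted
length with weight `|x|^p`. -/
theorem segment_minimizes_weighted_length
    (a b : EuclideanSpace ℝ (Fin 2)) (hab : a ≠ b)
    (hline : ∃ l : ℝ, (0 : EuclideanSpace ℝ (Fin 2)) = l • a + (1 - l) • b)
    (p : ℝ) (hp : 0 ≤ p)
    (γ : ℝ → EuclideanSpace ℝ (Fin 2)) (hγ : ContDiff ℝ 1 γ)
    (h0 : γ 0 = a) (h1 : γ 1 = b) :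
    (∫ t in (0 : ℝ)..1, ‖a + t • (b - a)‖ ^ p * ‖b - a‖) ≤
      ∫ t in (0 : ℝ)..1, ‖γ t‖ ^ p * ‖deriv γ t‖ := by
  obtain ⟨l, hl⟩ := hline
  have hba : b - a ≠ 0 := sub_ne_zero.mpr (Ne.symm hab)
  set c := ‖b - a‖ with hcdef
  have hc : (0:ℝ) < c := norm_pos_iff.mpr hba
  set u : EuclideanSpace ℝ (Fin 2) := c⁻¹ • (b - a) with hu
  have hun : ‖u‖ = 1 := by
    rw [hu, norm_smul, norm_inv, norm_norm, ← hcdef]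
    field_simp
  have ha : a = (l - 1) • (b - a) := by
    have key : a - (l - 1) • (b - a) = l • a + (1 - l) • b := by module
    exact sub_eq_zero.mp (key.trans hl.symm)
  have hb : b = l • (b - a) := by
    have key : b - l • (b - a) = l • a + (1 - l) • b := by module
    exact sub_eq_zero.mp (key.trans hl.symm)
  have hinner_ba : (⟪u, b - a⟫) = c := by
    rw [hu, real_inner_smul_left, real_inner_self_eq_norm_mul_norm, ← hcdef]
    field_simp
  have hia : (⟪u, a⟫) = (l - 1) * c := by
    rw [ha, real_inner_smul_right, hinner_ba]
  have hib : (⟪u, b⟫) = l * c := by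
    rw [hb, real_inner_smul_right, hinner_ba]
  have hd : Differentiable ℝ γ := hγ.differentiable one_ne_zero
  have hdc : Continuous (deriv γ) := hγ.continuous_deriv le_rfl
  have hg : Continuous fun x : ℝ => |x| ^ p :=
    continuous_abs.rpow_const (fun x => Or.inr hp)
  have hds : ∀ t : ℝ, HasDerivAt (fun t => (⟪u, γ t⟫)) (⟪u, deriv γ t⟫) t := by
    intro t
    have := ((innerSL ℝ u).hasFDerivAt.comp_hasDerivAt t (hd t).hasDerivAt)
    simpa [Function.comp_def] using this
  -- Step C: the segment integral equals ∫ x in (l-1)*c .. l*c, |x|^p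
  have hseg : (∫ t in (0:ℝ)..1, ‖a + t • (b - a)‖ ^ p * c) =
      ∫ x in ((l-1)*c)..(l*c), |x| ^ p := by
    have hcongr : ∀ t : ℝ, ‖a + t • (b - a)‖ ^ p * c = c • |((l - 1 + t) * c)| ^ p := by
      intro t
      have h1 : a + t • (b - a) = (l - 1 + t) • (b - a) := by
        rw [add_smul, ← ha]
      rw [h1, norm_smul, ← hcdef, Real.norm_eq_abs, abs_mul, abs_of_pos hc, smul_eq_mul]
      ring
    rw [intervalIntegral.integral_congr (fun t _ => hcongr t)]
    have hder : ∀ x ∈ Set.uIcc (0:ℝ) 1, HasDerivAt (fun t => (l - 1 + t) * c) c x := by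
      intro x _
      simpa using (((hasDerivAt_id x).const_add (l - 1)).mul_const c)
    have key := intervalIntegral.integral_comp_smul_deriv hder continuousOn_const hg
    simp only [Function.comp] at key
    rw [key]
    congr 1 <;> ring
  -- Step B: the projected integral
  have hproj : (∫ t in (0:ℝ)..1, (⟪u, deriv γ t⟫) • |((⟪u, γ t⟫))| ^ p) =
      ∫ x in ((l-1)*c)..(l*c), |x| ^ p := by
    have := intervalIntegral.integral_comp_smul_deriv (a := (0:ℝ)) (b := (1:ℝ))
      (fun x _ => hds x) (continuous_const.inner hdc).continuousOn hg
    simp only [Function.comp] at this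
    rw [this, h0, h1, hia, hib]
  -- Step A: pointwise comparison
  have hmono : (∫ t in (0:ℝ)..1, (⟪u, deriv γ t⟫) • |((⟪u, γ t⟫))| ^ p) ≤
      ∫ t in (0:ℝ)..1, ‖γ t‖ ^ p * ‖deriv γ t‖ := by
    apply intervalIntegral.integral_mono_on (by norm_num)
    · exact Continuous.intervalIntegrable (u := fun t => (⟪u, deriv γ t⟫) • |((⟪u, γ t⟫))| ^ p) ((continuous_const.inner (𝕜 := ℝ) hdc).smul
        (hg.comp (continuous_const.inner (𝕜 := ℝ) hγ.continuous))) 0 1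
    · exact (((hγ.continuous.norm.rpow_const (fun x => Or.inr hp)).mul
        hdc.norm)).intervalIntegrable 0 1
    · intro t _
      have h1 : (⟪u, deriv γ t⟫) ≤ ‖deriv γ t‖ := by
        calc (⟪u, deriv γ t⟫) ≤ |(⟪u, deriv γ t⟫)| := le_abs_self _
        _ ≤ ‖u‖ * ‖deriv γ t‖ := abs_real_inner_le_norm u (deriv γ t)
        _ = ‖deriv γ t‖ := by rw [hun, one_mul]
      have h2 : |((⟪u, γ t⟫))| ^ p ≤ ‖γ t‖ ^ p := by
        apply Real.rpow_le_rpow (abs_nonneg _) _ hp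
        calc |(⟪u, γ t⟫)| ≤ ‖u‖ * ‖γ t‖ := abs_real_inner_le_norm u (γ t)
        _ = ‖γ t‖ := by rw [hun, one_mul]
      have h3 : (0:ℝ) ≤ |((⟪u, γ t⟫))| ^ p := Real.rpow_nonneg (abs_nonneg _) p
      have h4 : (0:ℝ) ≤ ‖deriv γ t‖ := norm_nonneg _
      rw [smul_eq_mul]
      nlinarith
  calc (∫ t in (0:ℝ)..1, ‖a + t • (b - a)‖ ^ p * c)
      = ∫ x in ((l-1)*c)..(l*c), |x| ^ p := hseg
    _ = ∫ t in (0:ℝ)..1, (⟪u, deriv γ t⟫) • |((⟪u, γ t⟫))| ^ p := hproj.symm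
    _ ≤ _ := hmono
end

section
/- Let λ ∈ ℂ, let P be a holomorphic function on the open unit disc B₁ ⊂ ℂ with power series expansion P(z) = Σ_{n=0}^∞ aₙ zⁿ, and define g(z) = λ/z + P(z) for z ∈ B₁ \ {0}. For 0 < r < 1 let γ_r(t) = g(r e^{−it}) for t ∈ [0, 2π], and write γ_r = (γ_r)₁ + i(γ_r)₂ with (γ_r)₁, (γ_r)₂ real. Then the signed area integral A_r := (1/2) ∫₀^{2π} ((γ_r)₁(t)·(γ_r)₂'(t) − (γ_r)₂(t)·(γ_r)₁'(t)) dt satisfies A_r = π(|λ|²/r² − Σ_{n=1}^∞ n|aₙ|² r^{2n}); in particular A_r ≤ π|λ|²/r². -/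
open MeasureTheory Real Complex

noncomputable def Efun (w : ℝ) (t : ℝ) : ℂ := Complex.exp ((w : ℂ) * Complex.I * t)

lemma Efun_cont (w : ℝ) : Continuous (Efun w) := by
  unfold Efun; fun_prop

lemma Efun_norm (w t : ℝ) : ‖Efun w t‖ = 1 := by
  simp [Efun, Complex.norm_exp, Complex.mul_re, Complex.mul_im]

lemma Efun_mul (w w' : ℝ) (t : ℝ) : Efun w t * Efun w' t = Efun (w + w') t := by
  simp only [Efun, ← Complex.exp_add]; congr 1; push_cast; ring

lemma Efun_zero (t : ℝ) : Efun 0 t = 1 := by simp [Efun]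

lemma Efun_hasDerivAt (w : ℝ) (t : ℝ) :
    HasDerivAt (Efun w) ((w : ℂ) * Complex.I * Efun w t) t := by
  have h0 : HasDerivAt (fun s : ℝ => ((s : ℝ) : ℂ)) 1 t := by
    simpa using (hasDerivAt_id t).ofReal_comp
  have h1 := ((h0.const_mul ((w : ℂ) * Complex.I)).cexp :)
  convert h1 using 1
  rfl
  simp [Efun]; ring

lemma Efun_integral (k : ℤ) :
    (∫ t in (0:ℝ)..(2*π), Efun (k:ℝ) t) = if k = 0 then ((2*π:ℝ):ℂ) else 0 := by
  rcases eq_or_ne k 0 with hk | hk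
  · subst hk
    simp [Efun, intervalIntegral.integral_const]
  · have hc : (((k:ℝ):ℂ)) * Complex.I ≠ 0 := by
      apply mul_ne_zero _ Complex.I_ne_zero
      exact_mod_cast (Int.cast_ne_zero (α := ℂ)).2 hk
    have h := integral_exp_mul_complex (a := 0) (b := 2*π) hc
    have h2 : Complex.exp (((k:ℝ):ℂ) * Complex.I * ((2*π:ℝ):ℂ)) = 1 := by
      rw [show ((k:ℝ):ℂ) * Complex.I * ((2*π:ℝ):ℂ) = (k:ℂ) * (2*(π:ℂ)*Complex.I) by
        push_cast; ring]
      exact Complex.exp_int_mul_two_pi_mul_I k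
    simp only [Efun]
    rw [show (fun t:ℝ => Complex.exp (((k:ℝ):ℂ) * Complex.I * (t:ℂ)))
        = (fun t:ℝ => Complex.exp ((((k:ℝ):ℂ) * Complex.I) * (t:ℂ))) from rfl, h, if_neg hk]
    rw [h2]
    simp

lemma tsum_integral_swap (F : ℕ → ℝ → ℂ) (u : ℕ → ℝ)
    (hF : ∀ n, Continuous (F n)) (hu : Summable u)
    (hb : ∀ n t, ‖F n t‖ ≤ u n) :
    (∫ t in (0:ℝ)..(2*π), ∑' n, F n t) = ∑' n, ∫ t in (0:ℝ)..(2*π), F n t := by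
  have h2π : (0:ℝ) ≤ 2*π := by positivity
  simp only [intervalIntegral.integral_of_le h2π]
  refine (MeasureTheory.integral_tsum_of_summable_integral_norm
      (fun n => (hF n).integrableOn_Ioc) ?_).symm
  refine Summable.of_nonneg_of_le (fun n => integral_nonneg (fun t => norm_nonneg _))
      (fun n => ?_) (hu.mul_left (2*π))
  calc ∫ t in Set.Ioc (0:ℝ) (2*π), ‖F n t‖
      ≤ ∫ _t in Set.Ioc (0:ℝ) (2*π), u n := by
        apply setIntegral_mono_on ((hF n).norm.integrableOn_Ioc)
          (integrableOn_const measure_Ioc_lt_top.ne) measurableSet_Ioc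
          (fun t _ => hb n t)
    _ = (2*π) * u n := by
        rw [setIntegral_const]
        simp [Real.volume_Ioc, ENNReal.toReal_ofReal h2π, smul_eq_mul]
        exact Or.inl pi_pos.le

/-- Step 2.2 of the proof of Theorem 2.1 (i): the signed area integral of the
curve `t ↦ g(r e^{-it})`, where `g(z) = λ/z + P(z)` and `P(z) = Σ aₙ zⁿ` is
holomorphic on the unit disc, equals `π(|λ|²/r² − Σ_{n≥1} n|aₙ|² r^{2n})`; in
particular it is at most `π|λ|²/r²`. -/
theorem signed_area_of_laurent_curve
    (lam : ℂ) (P : ℂ → ℂ) (a : ℕ → ℂ)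
    (hP : DifferentiableOn ℂ P (Metric.ball 0 1))
    (ha : ∀ z ∈ Metric.ball (0 : ℂ) 1, HasSum (fun n => a n * z ^ n) (P z))
    (g : ℂ → ℂ) (hg : ∀ z : ℂ, z ≠ 0 → g z = lam / z + P z)
    (r : ℝ) (hr0 : 0 < r) (hr1 : r < 1)
    (γr : ℝ → ℂ) (hγr : ∀ t : ℝ, γr t = g ((r : ℂ) * Complex.exp (-Complex.I * t)))
    (Ar : ℝ)
    (hAr : Ar = (1 / 2) * ∫ t in (0 : ℝ)..(2 * π),
      ((γr t).re * deriv (fun s => (γr s).im) t -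
        (γr t).im * deriv (fun s => (γr s).re) t)) :
    Ar = π * (‖lam‖ ^ 2 / r ^ 2 -
        ∑' n : ℕ, (n : ℝ) * ‖a n‖ ^ 2 * r ^ (2 * n)) ∧
      Ar ≤ π * ‖lam‖ ^ 2 / r ^ 2 := by
  have hπ := Real.pi_pos
  set c : ℕ → ℂ := fun n => a n * (r:ℂ)^n with hcdef
  have hcn : ∀ n, ‖c n‖ = ‖a n‖ * r^n := by
    intro n
    simp [hcdef, norm_mul, norm_pow, Complex.norm_real, abs_of_pos hr0]
  -- summability
  set ρ : ℝ := (1 + r)/2 with hρdef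
  have hρ0 : 0 < ρ := by rw [hρdef]; linarith
  have hrρ : r < ρ := by rw [hρdef]; linarith
  have hρ1 : ρ < 1 := by rw [hρdef]; linarith
  have hρball : ((ρ:ℝ):ℂ) ∈ Metric.ball (0:ℂ) 1 := by
    simp [Metric.mem_ball, Complex.dist_eq, Complex.norm_real, abs_of_pos hρ0, hρ1]
  have hsumρ : Summable (fun n => ‖a n‖ * ρ^n) := by
    have h1 := summable_norm_iff.2 (ha _ hρball).summable
    have : (fun n => ‖a n * ((ρ:ℝ):ℂ)^n‖) = fun n => ‖a n‖ * ρ^n := by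
      funext n
      simp [norm_mul, norm_pow, Complex.norm_real, abs_of_pos hρ0]
    rwa [this] at h1
  obtain ⟨C, hC⟩ : ∃ C : ℝ, ∀ n, ‖a n‖ * ρ^n ≤ C := by
    obtain ⟨C, hC⟩ := hsumρ.tendsto_atTop_zero.bddAbove_range
    exact ⟨C, fun n => hC (Set.mem_range_self n)⟩
  set q : ℝ := r / ρ with hqdef
  have hq0 : 0 ≤ q := by positivity
  have hq1 : q < 1 := (div_lt_one hρ0).2 hrρ
  have hrq : r = ρ * q := by rw [hqdef]; field_simp
  have hcb : ∀ n, ‖c n‖ ≤ C * q^n := by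
    intro n
    have h1 : ‖c n‖ = (‖a n‖ * ρ^n) * q^n := by
      rw [hcn n, hrq, mul_pow]; ring
    rw [h1]
    exact mul_le_mul_of_nonneg_right (hC n) (by positivity)
  have hsum1 : Summable fun n => ‖c n‖ :=
    Summable.of_nonneg_of_le (fun n => norm_nonneg _) hcb
      ((summable_geometric_of_lt_one hq0 hq1).mul_left C)
  have hsum2 : Summable fun n : ℕ => (n:ℝ) * ‖c n‖ := by
    have hg' : Summable fun n : ℕ => (n:ℝ)^1 * q^n :=
      summable_pow_mul_geometric_of_norm_lt_one 1
        (by rwa [Real.norm_eq_abs, _root_.abs_of_nonneg hq0])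
    refine Summable.of_nonneg_of_le (fun n => by positivity) (fun n => ?_) (hg'.mul_left C)
    calc (n:ℝ) * ‖c n‖ ≤ (n:ℝ) * (C * q^n) :=
          mul_le_mul_of_nonneg_left (hcb n) n.cast_nonneg
      _ = C * ((n:ℝ)^1 * q^n) := by ring
  have hsum3 : Summable fun n : ℕ => (n:ℝ) * ‖c n‖^2 := by
    have hq2 : ‖q^2‖ < 1 := by
      rw [Real.norm_eq_abs, _root_.abs_of_nonneg (by positivity)]
      nlinarith
    have hg' : Summable fun n : ℕ => (n:ℝ)^1 * (q^2)^n :=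
      summable_pow_mul_geometric_of_norm_lt_one 1 hq2
    refine Summable.of_nonneg_of_le (fun n => by positivity) (fun n => ?_)
      ((hg'.mul_left (C^2)))
    have h1 : ‖c n‖^2 ≤ (C * q^n)^2 := by
      have := hcb n
      nlinarith [norm_nonneg (c n)]
    calc (n:ℝ) * ‖c n‖^2 ≤ (n:ℝ) * (C * q^n)^2 :=
          mul_le_mul_of_nonneg_left h1 n.cast_nonneg
      _ = C^2 * ((n:ℝ)^1 * (q^2)^n) := by ring
  -- series functions
  set S : ℝ → ℂ := fun t => ∑' n : ℕ, c n * Efun (-(n:ℝ)) t with hSdef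
  set T : ℝ → ℂ := fun t => ∑' n : ℕ, c n * (((-(n:ℝ) : ℝ) : ℂ) * Complex.I * Efun (-(n:ℝ)) t) with hTdef
  set Sc : ℝ → ℂ := fun t => ∑' n : ℕ, (starRingEnd ℂ) (c n) * Efun (n:ℝ) t with hScdef
  set D : ℝ → ℂ := fun t => lam/(r:ℂ) * (((1:ℝ) : ℂ) * Complex.I * Efun 1 t) + T t with hDdef
  have hnormS : ∀ (n : ℕ) (t : ℝ), ‖c n * Efun (-(n:ℝ)) t‖ = ‖c n‖ := by
    intro n t; rw [norm_mul, Efun_norm, mul_one]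
  have hnormSc : ∀ (n : ℕ) (t : ℝ), ‖(starRingEnd ℂ) (c n) * Efun (n:ℝ) t‖ = ‖c n‖ := by
    intro n t; rw [norm_mul, Efun_norm, mul_one, RCLike.norm_conj]
  have hnormT : ∀ (n : ℕ) (t : ℝ),
      ‖c n * (((-(n:ℝ) : ℝ) : ℂ) * Complex.I * Efun (-(n:ℝ)) t)‖ = (n:ℝ) * ‖c n‖ := by
    intro n t
    simp only [norm_mul, Efun_norm, mul_one, Complex.norm_I, Complex.norm_real,
      Real.norm_eq_abs, abs_neg, Nat.abs_cast]
    ring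
  have hsummableS : ∀ t, Summable (fun n : ℕ => c n * Efun (-(n:ℝ)) t) := by
    intro t; refine Summable.of_norm ?_
    simpa only [hnormS] using hsum1
  have hsummableSc : ∀ t, Summable (fun n : ℕ => (starRingEnd ℂ) (c n) * Efun (n:ℝ) t) := by
    intro t; refine Summable.of_norm ?_
    simpa only [hnormSc] using hsum1
  have hsummableT : ∀ t, Summable (fun n : ℕ =>
      c n * (((-(n:ℝ) : ℝ) : ℂ) * Complex.I * Efun (-(n:ℝ)) t)) := by
    intro t; refine Summable.of_norm ?_
    simpa only [hnormT] using hsum2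
  -- gamma form
  have hrC : ((r:ℝ):ℂ) ≠ 0 := by exact_mod_cast hr0.ne'
  have γform : ∀ t, γr t = lam/(r:ℂ) * Efun 1 t + S t := by
    intro t
    have hz : (r:ℂ) * Complex.exp (-Complex.I * t) ≠ 0 :=
      mul_ne_zero hrC (Complex.exp_ne_zero _)
    have hzb : (r:ℂ) * Complex.exp (-Complex.I * t) ∈ Metric.ball (0:ℂ) 1 := by
      rw [Metric.mem_ball, dist_zero_right, norm_mul, Complex.norm_real,
        Real.norm_eq_abs, _root_.abs_of_pos hr0]
      have h1 : ‖Complex.exp (-Complex.I * t)‖ = 1 := by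
        rw [Complex.norm_exp]
        simp
      rw [h1, mul_one]; exact hr1
    rw [hγr t, hg _ hz]
    have hPz := (ha _ hzb).tsum_eq
    rw [← hPz]
    congr 1
    · rw [show (-Complex.I * (t:ℂ)) = -(Complex.I * t) by ring, Complex.exp_neg]
      rw [show Efun 1 t = Complex.exp (Complex.I * t) by
        rw [Efun]; congr 1; push_cast; ring]
      field_simp
    · rw [hSdef]
      apply tsum_congr
      intro n
      rw [mul_pow, ← Complex.exp_nat_mul, hcdef]
      simp only []
      rw [show Efun (-(n:ℝ)) t = Complex.exp ((n:ℂ) * (-Complex.I * t)) by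
        rw [Efun]; congr 1; push_cast; ring]
      ring
  -- continuity
  have hScont : Continuous S := by
    rw [hSdef]
    exact continuous_tsum (fun n => continuous_const.mul (Efun_cont _)) hsum1
      (fun n t => le_of_eq (hnormS n t))
  have hSccont : Continuous Sc := by
    rw [hScdef]
    exact continuous_tsum (fun n => continuous_const.mul (Efun_cont _)) hsum1
      (fun n t => le_of_eq (hnormSc n t))
  have hTcont : Continuous T := by
    rw [hTdef]
    exact continuous_tsum (fun n => continuous_const.mul (continuous_const.mul (Efun_cont _)))
      hsum2 (fun n t => le_of_eq (hnormT n t))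
  have hDcont : Continuous D := by
    rw [hDdef]
    exact (continuous_const.mul (continuous_const.mul (Efun_cont 1))).add hTcont
  have hγcont : Continuous γr := by
    rw [show γr = fun t => lam/(r:ℂ) * Efun 1 t + S t from funext γform]
    exact (continuous_const.mul (Efun_cont 1)).add hScont
  -- derivative
  have hγ' : ∀ t, HasDerivAt γr (D t) t := by
    intro t
    rw [show γr = fun t => lam/(r:ℂ) * Efun 1 t + S t from funext γform, hDdef, hSdef, hTdef]
    refine HasDerivAt.add ?_ ?_
    · exact (Efun_hasDerivAt 1 t).const_mul _
    · exact hasDerivAt_tsum hsum2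
        (fun n y => (Efun_hasDerivAt (-(n:ℝ)) y).const_mul (c n))
        (fun n y => le_of_eq (hnormT n y)) (hsummableS 0) t
  have hre : ∀ t, deriv (fun s => (γr s).re) t = (D t).re := by
    intro t
    have h2 : HasDerivAt (fun s => (γr s).re) ((D t).re) t := by
      have h3 := Complex.reCLM.hasFDerivAt.comp_hasDerivAt t (hγ' t)
      exact h3
    exact h2.deriv
  have him : ∀ t, deriv (fun s => (γr s).im) t = (D t).im := by
    intro t
    have h2 : HasDerivAt (fun s => (γr s).im) ((D t).im) t := by
      have h3 := Complex.imCLM.hasFDerivAt.comp_hasDerivAt t (hγ' t)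
      exact h3
    exact h2.deriv
  -- conjugate of gamma
  have hEconj : ∀ (w : ℝ) (t : ℝ), (starRingEnd ℂ) (Efun w t) = Efun (-w) t := by
    intro w t
    rw [Efun, Efun, ← Complex.exp_conj]
    congr 1
    simp [Complex.conj_I, Complex.conj_ofReal]
  have hconjS : ∀ t, (starRingEnd ℂ) (S t) = Sc t := by
    intro t
    have h1 : HasSum (fun n : ℕ => c n * Efun (-(n:ℝ)) t) (S t) := by
      rw [hSdef]; exact (hsummableS t).hasSum
    have h2 : HasSum (fun n : ℕ => (starRingEnd ℂ) (c n * Efun (-(n:ℝ)) t))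
        ((starRingEnd ℂ) (S t)) :=
      h1.map (starRingEnd ℂ).toAddMonoidHom Complex.continuous_conj
    rw [← h2.tsum_eq, hScdef]
    apply tsum_congr; intro n
    rw [map_mul, hEconj, neg_neg]
  have hconj : ∀ t, (starRingEnd ℂ) (γr t)
      = (starRingEnd ℂ) (lam/(r:ℂ)) * Efun (-1) t + Sc t := by
    intro t
    rw [γform t, map_add, map_mul, hEconj, hconjS t]
  set K1 : ℂ := (starRingEnd ℂ) (lam/(r:ℂ)) * (lam/(r:ℂ)) * (((1:ℝ):ℂ) * Complex.I) with hK1def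
  have expand : ∀ t, (starRingEnd ℂ) (γr t) * D t =
      K1 * (Efun (-1) t * Efun 1 t)
      + (starRingEnd ℂ) (lam/(r:ℂ)) * (Efun (-1) t * T t)
      + (lam/(r:ℂ) * (((1:ℝ):ℂ) * Complex.I)) * (Sc t * Efun 1 t)
      + Sc t * T t := by
    intro t
    rw [hconj t, hDdef, hK1def]
    ring
  -- the four integrals
  have hJ1 : (∫ t in (0:ℝ)..(2*π), K1 * (Efun (-1) t * Efun 1 t)) = ((2*π:ℝ):ℂ) * K1 := by
    have h1 : ∀ t:ℝ, K1 * (Efun (-1) t * Efun 1 t) = K1 := by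
      intro t; rw [Efun_mul]; norm_num [Efun_zero]
    simp only [h1]
    rw [intervalIntegral.integral_const, sub_zero, Complex.real_smul]
  have hJ2 : (∫ t in (0:ℝ)..(2*π), Efun (-1) t * T t) = 0 := by
    have hET : ∀ t, Efun (-1) t * T t = ∑' n : ℕ,
        (c n * (((-(n:ℝ) : ℝ):ℂ) * Complex.I)) * Efun (-1 + -(n:ℝ)) t := by
      intro t
      rw [hTdef, ← tsum_mul_left]
      apply tsum_congr; intro n
      rw [← Efun_mul (-1) (-(n:ℝ)) t]
      ring
    simp only [hET]
    rw [tsum_integral_swap (fun n t => (c n * (((-(n:ℝ) : ℝ):ℂ) * Complex.I)) * Efun (-1 + -(n:ℝ)) t) (fun n => (n:ℝ) * ‖c n‖)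
      (fun n => continuous_const.mul (Efun_cont _)) hsum2
      (fun n t => le_of_eq (by
        simp only [norm_mul, Efun_norm, mul_one, Complex.norm_I, Complex.norm_real,
          Real.norm_eq_abs, abs_neg, Nat.abs_cast]
        ring))]
    have h0 : ∀ n : ℕ, (∫ t in (0:ℝ)..(2*π),
        (c n * (((-(n:ℝ) : ℝ):ℂ) * Complex.I)) * Efun (-1 + -(n:ℝ)) t) = 0 := by
      intro n
      rw [intervalIntegral.integral_const_mul]
      have hk := Efun_integral (-1 + -(n:ℤ))
      rw [show (((-1 + -(n:ℤ)):ℤ):ℝ) = (-1 + -(n:ℝ)) by push_cast; ring] at hk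
      rw [hk, if_neg (by omega), mul_zero]
    simp only [h0, tsum_zero]
  have hJ3 : (∫ t in (0:ℝ)..(2*π), Sc t * Efun 1 t) = 0 := by
    have hScE : ∀ t, Sc t * Efun 1 t = ∑' m : ℕ,
        (starRingEnd ℂ) (c m) * Efun ((m:ℝ) + 1) t := by
      intro t
      rw [hScdef, ← tsum_mul_right]
      apply tsum_congr; intro m
      rw [mul_assoc, Efun_mul]
    simp only [hScE]
    rw [tsum_integral_swap (fun m t => (starRingEnd ℂ) (c m) * Efun ((m:ℝ) + 1) t) (fun m => ‖c m‖)
      (fun m => continuous_const.mul (Efun_cont _)) hsum1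
      (fun m t => le_of_eq (by rw [norm_mul, Efun_norm, mul_one, RCLike.norm_conj]))]
    have h0 : ∀ m : ℕ, (∫ t in (0:ℝ)..(2*π),
        (starRingEnd ℂ) (c m) * Efun ((m:ℝ) + 1) t) = 0 := by
      intro m
      rw [intervalIntegral.integral_const_mul]
      have hk := Efun_integral ((m:ℤ) + 1)
      rw [show ((((m:ℤ) + 1):ℤ):ℝ) = ((m:ℝ) + 1) by push_cast; ring] at hk
      rw [hk, if_neg (by omega), mul_zero]
    simp only [h0, tsum_zero]
  -- the main quadratic term
  set M : ℝ := ∑' n : ℕ, ‖c n‖ with hMdef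
  have hM : ∀ t, ‖Sc t‖ ≤ M := by
    intro t
    rw [hScdef, hMdef]
    have h1 := norm_tsum_le_tsum_norm (f := fun n : ℕ => (starRingEnd ℂ) (c n) * Efun (n:ℝ) t)
      (by simpa only [hnormSc] using hsum1)
    simpa only [hnormSc] using h1
  have hinner : ∀ n : ℕ, (∫ t in (0:ℝ)..(2*π), Sc t * Efun (-(n:ℝ)) t)
      = (starRingEnd ℂ) (c n) * ((2*π:ℝ):ℂ) := by
    intro n
    have h1 : ∀ t, Sc t * Efun (-(n:ℝ)) t = ∑' m : ℕ,
        (starRingEnd ℂ) (c m) * Efun ((m:ℝ) + -(n:ℝ)) t := by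
      intro t
      rw [hScdef, ← tsum_mul_right]
      apply tsum_congr; intro m
      rw [mul_assoc, Efun_mul]
    simp only [h1]
    rw [tsum_integral_swap (fun m t => (starRingEnd ℂ) (c m) * Efun ((m:ℝ) + -(n:ℝ)) t) (fun m => ‖c m‖)
      (fun m => continuous_const.mul (Efun_cont _)) hsum1
      (fun m t => le_of_eq (by rw [norm_mul, Efun_norm, mul_one, RCLike.norm_conj]))]
    rw [tsum_eq_single n ?_]
    · rw [intervalIntegral.integral_const_mul,
        show ((n:ℝ) + -(n:ℝ)) = (((0:ℤ):ℤ):ℝ) by push_cast; ring,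
        Efun_integral 0, if_pos rfl]
    · intro m hmn
      rw [intervalIntegral.integral_const_mul]
      have hk := Efun_integral ((m:ℤ) + -(n:ℤ))
      rw [show ((((m:ℤ) + -(n:ℤ)):ℤ):ℝ) = ((m:ℝ) + -(n:ℝ)) by push_cast; ring] at hk
      rw [hk, if_neg (by omega), mul_zero]
  have hJ4 : (∫ t in (0:ℝ)..(2*π), Sc t * T t) = ∑' n : ℕ,
      (c n * (((-(n:ℝ) : ℝ):ℂ) * Complex.I)) * ((starRingEnd ℂ) (c n) * ((2*π:ℝ):ℂ)) := by
    have hScT : ∀ t, Sc t * T t = ∑' n : ℕ,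
        (c n * (((-(n:ℝ) : ℝ):ℂ) * Complex.I)) * (Sc t * Efun (-(n:ℝ)) t) := by
      intro t
      rw [hTdef, ← tsum_mul_left]
      apply tsum_congr; intro n
      ring
    simp only [hScT]
    rw [tsum_integral_swap (fun n t => (c n * (((-(n:ℝ) : ℝ):ℂ) * Complex.I)) * (Sc t * Efun (-(n:ℝ)) t)) (fun n => (n:ℝ) * ‖c n‖ * M)
      (fun n => continuous_const.mul (hSccont.mul (Efun_cont _)))
      (hsum2.mul_right M)
      (fun n t => by
        simp only [norm_mul, Efun_norm, mul_one, Complex.norm_I, Complex.norm_real,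
          Real.norm_eq_abs, abs_neg, Nat.abs_cast]
        have hmm := mul_le_mul_of_nonneg_left (hM t) (by positivity : (0:ℝ) ≤ (n:ℝ) * ‖c n‖)
        nlinarith [hmm])]
    apply tsum_congr; intro n
    rw [intervalIntegral.integral_const_mul, hinner n]
  -- the sum sigma
  set σ : ℝ := ∑' n : ℕ, (n:ℝ) * ‖a n‖^2 * r^(2*n) with hσdef
  have hterm : ∀ n : ℕ, (n:ℝ) * ‖a n‖^2 * r^(2*n) = (n:ℝ) * ‖c n‖^2 := by
    intro n
    rw [hcn n]
    ring
  have hσ : σ = ∑' n : ℕ, (n:ℝ) * ‖c n‖^2 := by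
    rw [hσdef]; exact tsum_congr hterm
  have hterm2 : ∀ n : ℕ,
      (c n * (((-(n:ℝ) : ℝ):ℂ) * Complex.I)) * ((starRingEnd ℂ) (c n) * ((2*π:ℝ):ℂ))
      = -(((2*π:ℝ):ℂ)) * Complex.I * ((((n:ℝ) * ‖c n‖^2 : ℝ)):ℂ) := by
    intro n
    have h1 : c n * (starRingEnd ℂ) (c n) = ((‖c n‖^2 : ℝ):ℂ) := by
      rw [Complex.mul_conj, Complex.normSq_eq_norm_sq]
      try push_cast
      try ring
    calc (c n * (((-(n:ℝ) : ℝ):ℂ) * Complex.I)) * ((starRingEnd ℂ) (c n) * ((2*π:ℝ):ℂ))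
        = (c n * (starRingEnd ℂ) (c n)) * ((((-(n:ℝ) : ℝ)):ℂ) * Complex.I * ((2*π:ℝ):ℂ)) := by
          ring
      _ = _ := by rw [h1]; push_cast; ring
  have hJ4' : (∫ t in (0:ℝ)..(2*π), Sc t * T t)
      = -(((2*π:ℝ):ℂ)) * Complex.I * ((σ:ℝ):ℂ) := by
    rw [hJ4, tsum_congr hterm2, tsum_mul_left]
    congr 1
    rw [hσ]
    have h2 := Complex.ofRealCLM.map_tsum (f := fun n : ℕ => (n:ℝ) * ‖c n‖^2) hsum3
    simpa using h2.symm
  -- integrability of the pieces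
  have hi1 : IntervalIntegrable (fun t => K1 * (Efun (-1) t * Efun 1 t)) volume 0 (2*π) :=
    (continuous_const.mul ((Efun_cont _).mul (Efun_cont _))).intervalIntegrable _ _
  have hi2 : IntervalIntegrable
      (fun t => (starRingEnd ℂ) (lam/(r:ℂ)) * (Efun (-1) t * T t)) volume 0 (2*π) :=
    (continuous_const.mul ((Efun_cont _).mul hTcont)).intervalIntegrable _ _
  have hi3 : IntervalIntegrable
      (fun t => (lam/(r:ℂ) * (((1:ℝ):ℂ) * Complex.I)) * (Sc t * Efun 1 t)) volume 0 (2*π) :=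
    (continuous_const.mul (hSccont.mul (Efun_cont _))).intervalIntegrable _ _
  have hi4 : IntervalIntegrable (fun t => Sc t * T t) volume 0 (2*π) :=
    (hSccont.mul hTcont).intervalIntegrable _ _
  have hItot : (∫ t in (0:ℝ)..(2*π), (starRingEnd ℂ) (γr t) * D t)
      = ((2*π:ℝ):ℂ) * Complex.I * (((‖lam‖^2 / r^2 - σ : ℝ)):ℂ) := by
    simp only [expand]
    rw [intervalIntegral.integral_add ((hi1.add hi2).add hi3) hi4,
      intervalIntegral.integral_add (hi1.add hi2) hi3,
      intervalIntegral.integral_add hi1 hi2]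
    rw [hJ1, hJ4', intervalIntegral.integral_const_mul, hJ2,
      intervalIntegral.integral_const_mul, hJ3]
    have hK1 : K1 = ((‖lam‖^2 / r^2 : ℝ):ℂ) * Complex.I := by
      rw [hK1def]
      have h1 : (starRingEnd ℂ) (lam/(r:ℂ)) * (lam/(r:ℂ))
          = ((‖lam/(r:ℂ)‖^2 : ℝ):ℂ) := by
        rw [mul_comm, Complex.mul_conj, Complex.normSq_eq_norm_sq]
        try push_cast
        try ring
      rw [h1, show ‖lam/(r:ℂ)‖ = ‖lam‖ / r by
        rw [norm_div, Complex.norm_real, Real.norm_eq_abs, _root_.abs_of_pos hr0]]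
      push_cast [div_pow]
      try ring
    rw [hK1]
    push_cast
    ring
  -- rewrite Ar
  have hconjD_int : IntervalIntegrable (fun t => (starRingEnd ℂ) (γr t) * D t) volume 0 (2*π) :=
    ((Complex.continuous_conj.comp hγcont).mul hDcont).intervalIntegrable _ _
  have hAr2 : Ar = (1/2) * ((∫ t in (0:ℝ)..(2*π), (starRingEnd ℂ) (γr t) * D t)).im := by
    rw [hAr]
    congr 1
    have him2 : (∫ t in (0:ℝ)..(2*π), (starRingEnd ℂ) (γr t) * D t).im
        = ∫ t in (0:ℝ)..(2*π), ((starRingEnd ℂ) (γr t) * D t).im := by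
      have h4 := Complex.imCLM.intervalIntegral_comp_comm hconjD_int
      simpa [Complex.imCLM_apply] using h4.symm
    rw [him2]
    apply intervalIntegral.integral_congr
    intro t _
    simp only [him t, hre t, Complex.mul_im, Complex.conj_re, Complex.conj_im]
    ring
  have hArval : Ar = π * (‖lam‖^2 / r^2 - σ) := by
    rw [hAr2, hItot]
    have h3 : ∀ y : ℝ, ((((2*π:ℝ)):ℂ) * Complex.I * ((y:ℝ):ℂ)).im = 2*π*y := fun y => by simp
    rw [h3]
    ring
  have hσ0 : 0 ≤ σ := by
    rw [hσdef]
    apply tsum_nonneg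
    intro n
    positivity
  constructor
  · exact hArval
  · rw [hArval]
    have h5 : π * (‖lam‖^2/r^2 - σ) = π * ‖lam‖^2/r^2 - π*σ := by ring
    rw [h5]
    linarith [mul_nonneg hπ.le hσ0]
end
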